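/- Let F(t₁,...,tₙ) = 1 + Σ_{i>0} g_i t^i/i! be a multivariate exponential power series over a Q-algebra with constant term 1, and let m be a positive integer. Then the coefficient of t^i/i! in F^m equals Σ over partitions λ of the multi-index i of ((m)_{ℓ(λ)} / (m(λ)! λ!)) · i! · g_λ, where a partition λ of i is a multiset of nonzero multi-indices {λ₁^{r₁}, λ₂^{r₂},...} (λ₁ < λ₂ < ... in lexicographic order) with Σ r_j λ_j = i, ℓ(λ) = Σ r_j, (m)_k = m(m-1)···(m-k+1) is the falling factorial, m(λ)! = r₁! r₂! ···, λ! = (λ₁!)^{r₁}(λ₂!)^{r₂}···, and g_λ = g_{λ₁}^{r₁} g_{λ₂}^{r₂}···. -/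

import Mathlib

open Nat

/-!
By the multinomial theorem (applied to the truncation of `F` below `i`), the coefficient of `t^i`
in `F^m` is a sum over multisets `k` of `m` multi-indices with sum `i`, each weighted by its
number of orderings. Deleting the zeros from `k` is a bijection onto the partitions of `i` with at
most `m` parts, and `k = λ + 0^(m - ℓ(λ))` has `m! / ((m - ℓ(λ))! m(λ)!) = (m)_ℓ(λ) / m(λ)!`
orderings. Partitions with more than `m` parts contribute nothing since then `(m)_ℓ(λ) = 0`.
-/

namespace Multiset

variable {α : Type*} [DecidableEq α]

theorem prod_factorial_count_mul_countPerms (s : Multiset α) :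
    (∏ x ∈ s.toFinset, (s.count x)!) * s.countPerms = (card s)! := by
  have := Nat.multinomial_spec s.toFinset s.count
  rwa [toFinset_sum_count_eq] at this

theorem card_filter_ne_add_count (a : α) (s : Multiset α) :
    card (s.filter (· ≠ a)) + s.count a = card s := by
  rw [← filter_add_not (· ≠ a) s, card_add, count_add, count_eq_zero.mpr (by simp)]
  simp [count_eq_card_filter_eq, eq_comm]

theorem prod_factorial_count_filter_ne_mul_countPerms (a : α) (s : Multiset α) :
    (∏ x ∈ (s.filter (· ≠ a)).toFinset, ((s.filter (· ≠ a)).count x)!) * s.countPerms =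
      (card s).descFactorial (card (s.filter (· ≠ a))) := by
  have hfilter : s.filter (a ≠ ·) = s.filter (· ≠ a) := filter_congr fun _ _ => ne_comm
  rw [countPerms_filter_ne a, hfilter, mul_left_comm, prod_factorial_count_mul_countPerms,
    ← card_filter_ne_add_count a, ← choose_symm_add, descFactorial_eq_factorial_mul_choose,
    mul_comm]

theorem filter_ne_add_replicate (a : α) (s : Multiset α) :
    s.filter (· ≠ a) + replicate (card s - card (s.filter (· ≠ a))) a = s := by
  rw [← card_filter_ne_add_count a s, Nat.add_sub_cancel_left, ← filter_eq']
  simpa only [ne_eq, not_not] using filter_add_not (· ≠ a) s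

theorem prod_map_filter_ne {M : Type*} [CommMonoid M] {f : α → M} {a : α} (ha : f a = 1)
    (s : Multiset α) : ((s.filter (· ≠ a)).map f).prod = (s.map f).prod := by
  conv_rhs => rw [← filter_add_not (· ≠ a) s, map_add, prod_add]
  have hone : ((s.filter fun x => ¬x ≠ a).map f).prod = 1 := prod_eq_one fun x hx => by
    obtain ⟨y, hy, rfl⟩ := mem_map.mp hx
    rwa [not_not.mp (mem_filter.mp hy).2]
  rw [hone, mul_one]

theorem prod_map_smul {ι M N : Type*} [CommMonoid M] [CommMonoid N] [MulAction M N]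
    [IsScalarTower M N N] [SMulCommClass M N N] (s : Multiset ι) (b : ι → M) (f : ι → N) :
    (s.map fun i => b i • f i).prod = (s.map b).prod • (s.map f).prod := by
  induction s using Multiset.induction with
  | empty => simp
  | cons i s ih => simp only [map_cons, prod_cons, ih, smul_mul_smul_comm]

theorem sum_filter_ne_zero {M : Type*} [AddCommMonoid M] [DecidableEq M] (s : Multiset M) :
    (s.filter (· ≠ 0)).sum = s.sum := by
  conv_rhs => rw [← filter_ne_add_replicate 0 s]
  simp

end Multiset

namespace Sym

variable {α : Type*} [AddCommMonoid α] [PartialOrder α] [CanonicallyOrderedAdd α]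
  [LocallyFiniteOrderBot α] [DecidableEq α]

theorem bijOn_filter_ne_zero (m : ℕ) (i : α) :
    Set.BijOn (fun k : Sym α m => (k : Multiset α).filter (· ≠ 0))
      ↑(((Finset.Iic i).sym m).filter fun k : Sym α m => (k : Multiset α).sum = i)
      {P | 0 ∉ P ∧ P.sum = i ∧ Multiset.card P ≤ m} := by
  refine ⟨fun k hk => ?_, fun k₁ _ k₂ _ h => ?_, fun P ⟨hP0, hPsum, hPcard⟩ => ?_⟩
  · obtain ⟨-, hsum⟩ := Finset.mem_filter.mp hk
    refine ⟨fun h => (Multiset.mem_filter.mp h).2 rfl, ?_, ?_⟩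
    · rw [Multiset.sum_filter_ne_zero, hsum]
    · exact (Multiset.card_le_card (Multiset.filter_le _ _)).trans_eq k.card_coe
  · apply coe_injective
    rw [← Multiset.filter_ne_add_replicate 0 (k₁ : Multiset α),
      ← Multiset.filter_ne_add_replicate 0 (k₂ : Multiset α), card_coe, card_coe]
    exact congrArg (fun P => P + Multiset.replicate (m - Multiset.card P) 0) h
  · have hcard : Multiset.card (P + Multiset.replicate (m - Multiset.card P) 0) = m := by
      simp only [Multiset.card_add, Multiset.card_replicate]; omega
    refine ⟨⟨_, hcard⟩, Finset.mem_filter.mpr ⟨Finset.mem_sym_iff.mpr fun a ha => ?_, ?_⟩, ?_⟩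
    · rcases Multiset.mem_add.mp ha with ha | ha
      · exact Finset.mem_Iic.mpr (hPsum ▸ Multiset.le_sum_of_mem ha)
      · simp [Multiset.eq_of_mem_replicate ha]
    · simp [hPsum]
    · show (P + _).filter (· ≠ 0) = P
      rw [Multiset.filter_add,
        Multiset.filter_eq_self (p := (· ≠ 0)).mpr fun a ha h => hP0 (h ▸ ha),
        Multiset.filter_eq_nil.mpr fun a ha => not_not.mpr (Multiset.eq_of_mem_replicate ha),
        add_zero]

end Sym

namespace MvPowerSeries

variable {σ R : Type*} [CommSemiring R]

theorem coeff_pow_eq_of_coeff_eq [DecidableEq σ] {F G : MvPowerSeries σ R} {i : σ →₀ ℕ}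
    (h : ∀ j ≤ i, coeff j F = coeff j G) (m : ℕ) : coeff i (F ^ m) = coeff i (G ^ m) := by
  rw [coeff_pow, coeff_pow]
  refine Finset.sum_congr rfl fun l hl => Finset.prod_congr rfl fun t ht => h _ ?_
  rw [← (Finset.mem_finsuppAntidiag.mp hl).1]
  exact Finset.single_le_sum (f := fun j => l j) (fun j _ => _root_.zero_le) ht

theorem prod_map_monomial (s : Multiset (σ →₀ ℕ)) (c : (σ →₀ ℕ) → R) :
    (s.map fun j => monomial j (c j)).prod = monomial s.sum (s.map c).prod := by
  induction s using Multiset.induction with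
  | empty => simp [monomial_zero_one]
  | cons a s ih => simp [ih, monomial_mul_monomial]

theorem coeff_pow_eq_sum_sym [DecidableEq σ] (F : MvPowerSeries σ R) (m : ℕ) (i : σ →₀ ℕ) :
    coeff i (F ^ m) =
      ∑ k ∈ ((Finset.Iic i).sym m).filter (fun k : Sym (σ →₀ ℕ) m => (k : Multiset _).sum = i),
        (k : Multiset (σ →₀ ℕ)).countPerms • ((k : Multiset (σ →₀ ℕ)).map (coeff · F)).prod := by
  have htrunc : coeff i (F ^ m) =
      coeff i ((∑ j ∈ Finset.Iic i, monomial j (coeff j F)) ^ m) := by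
    refine coeff_pow_eq_of_coeff_eq (fun j hj => ?_) m
    simp [coeff_monomial, Finset.mem_Iic.mpr hj]
  rw [htrunc, Finset.sum_pow, map_sum, Finset.sum_filter]
  refine Finset.sum_congr rfl fun k _ => ?_
  rw [prod_map_monomial, ← nsmul_eq_mul, map_nsmul, coeff_monomial]
  by_cases hk : (k : Multiset (σ →₀ ℕ)).sum = i
  · simp [hk]
  · simp [hk, Ne.symm hk]

end MvPowerSeries

theorem smul_countPerms_smul_prod_map_eq {α R : Type*} [DecidableEq α] [Zero α] [CommSemiring R]
    [Algebra ℚ R] {w : α → ℚ} (hw : ∀ p, w p ≠ 0) {c g : α → R}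
    (hc : ∀ p, c p = if p = 0 then 1 else (w p)⁻¹ • g p) (a : ℚ) (k : Multiset α) :
    a • (k.countPerms • (k.map c).prod) =
      (((Multiset.card k).descFactorial (Multiset.card (k.filter (· ≠ 0))) * a) /
          ((∏ x ∈ (k.filter (· ≠ 0)).toFinset, (((k.filter (· ≠ 0)).count x)! : ℚ)) *
            ((k.filter (· ≠ 0)).map w).prod)) •
        ((k.filter (· ≠ 0)).map g).prod := by
  set P := k.filter (· ≠ 0)
  have hprod : (k.map c).prod = (P.map w).prod⁻¹ • (P.map g).prod := by
    rw [← Multiset.prod_map_filter_ne (a := 0) (by simp [hc]) k,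
      Multiset.map_congr rfl fun p hp => (hc p).trans (if_neg (Multiset.mem_filter.mp hp).2),
      Multiset.prod_map_smul, Multiset.prod_map_inv]
  have hcount : (∏ x ∈ P.toFinset, ((P.count x)! : ℚ)) * k.countPerms =
      (Multiset.card k).descFactorial (Multiset.card P) := by
    exact_mod_cast Multiset.prod_factorial_count_filter_ne_mul_countPerms 0 k
  have hC : ∏ x ∈ P.toFinset, ((P.count x)! : ℚ) ≠ 0 := by positivity
  have hW : (P.map w).prod ≠ 0 := Multiset.prod_ne_zero fun h => by
    obtain ⟨p, -, hp⟩ := Multiset.mem_map.mp h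
    exact hw p hp
  rw [hprod, ← Nat.cast_smul_eq_nsmul ℚ, smul_smul, smul_smul, ← hcount]
  congr 1
  field_simp

theorem stmt4_general {R : Type*} [CommRing R] [Algebra ℚ R] {n : ℕ}
    (g : (Fin n →₀ ℕ) → R)
    (F : MvPowerSeries (Fin n) R)
    (hF : ∀ i : Fin n →₀ ℕ,
      MvPowerSeries.coeff i F =
        if i = 0 then 1 else (∏ j, ((i j)! : ℚ))⁻¹ • g i)
    (m : ℕ) (i : Fin n →₀ ℕ) :
    (∏ j, ((i j)! : ℚ)) • MvPowerSeries.coeff i (F ^ m) =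
      ∑ᶠ (P : Multiset (Fin n →₀ ℕ)) (_ : (0 : Fin n →₀ ℕ) ∉ P ∧ P.sum = i),
        (((m.descFactorial P.card : ℚ) * ∏ j, ((i j)! : ℚ)) /
            ((∏ x ∈ P.toFinset, ((P.count x)! : ℚ)) *
              (P.map fun p => ∏ j, ((p j)! : ℚ)).prod)) •
          (P.map g).prod := by
  have hw (p : Fin n →₀ ℕ) : ∏ j, ((p j)! : ℚ) ≠ 0 := by positivity
  rw [MvPowerSeries.coeff_pow_eq_sum_sym, Finset.smul_sum, ← finsum_mem_coe_finset]
  refine (finsum_mem_eq_of_bijOn _ (Sym.bijOn_filter_ne_zero m i) fun k _ => ?_).trans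
    (finsum_mem_inter_support_eq' _ _ _ fun P hP => ?_)
  · rw [smul_countPerms_smul_prod_map_eq hw hF, Sym.card_coe]
  · have hcard : P.card ≤ m := by
      by_contra! hlt
      exact hP (by simp [Nat.descFactorial_eq_zero_iff_lt.mpr hlt])
    exact ⟨fun h => ⟨h.1, h.2.1⟩, fun h => ⟨h.1, h.2, hcard⟩⟩

/-- The coefficient of `t^i / i!` in the `m`-th power of a multivariate exponential power
series `F = 1 + ∑_{i > 0} g_i t^i / i!` with constant term `1` equals the sum over partitions
`λ` of the multi-index `i` (multisets of nonzero multi-indices with `λ.sum = i`) of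
`((m)_{ℓ(λ)} / (m(λ)! λ!)) · i! · g_λ`, where `(m)_k` is the falling factorial,
`m(λ)! = ∏ r_j!` (product of factorials of multiplicities), `λ! = ∏ (λ_j!)^{r_j}` and
`g_λ = ∏ g_{λ_j}^{r_j}`. -/
theorem stmt4 {R : Type*} [CommRing R] [Algebra ℚ R] {n : ℕ}
    (g : (Fin n →₀ ℕ) → R)
    (F : MvPowerSeries (Fin n) R)
    (hF : ∀ i : Fin n →₀ ℕ,
      MvPowerSeries.coeff i F =
        if i = 0 then 1 else (∏ j, ((i j)! : ℚ))⁻¹ • g i)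
    (m : ℕ) (hm : 1 ≤ m) (i : Fin n →₀ ℕ) :
    (∏ j, ((i j)! : ℚ)) • MvPowerSeries.coeff i (F ^ m) =
      ∑ᶠ (P : Multiset (Fin n →₀ ℕ)) (_ : (0 : Fin n →₀ ℕ) ∉ P ∧ P.sum = i),
        (((m.descFactorial P.card : ℚ) * ∏ j, ((i j)! : ℚ)) /
            ((∏ x ∈ P.toFinset, ((P.count x)! : ℚ)) *
              (P.map fun p => ∏ j, ((p j)! : ℚ)).prod)) •
          (P.map g).prod :=
  stmt4_general g F hF m i
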